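/- Completeness of EqFSCL for FSCL_se: for all closed SCL-terms P and Q, if se(P) = se(Q) then EqFSCL ⊢ P = Q. -/

import Mathlib

/-! Shared definitions for left-sequential logics (FEL and SCL),
    evaluation trees, and decompositions. -/

/-- FEL-terms over atoms `A` (`and` = full left-sequential conjunction `∧•`,
    `or` = full left-sequential disjunction `∨•`). -/
inductive FTerm (A : Type) : Type
  | atom : A → FTerm A
  | tru  : FTerm A
  | fls  : FTerm A
  | neg  : FTerm A → FTerm A
  | and  : FTerm A → FTerm A → FTerm A
  | or   : FTerm A → FTerm A → FTerm A

/-- SCL-terms over atoms `A` (`and` = short-circuit conjunction `∧◦`,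
    `or` = short-circuit disjunction `∨◦`). -/
inductive STerm (A : Type) : Type
  | atom : A → STerm A
  | tru  : STerm A
  | fls  : STerm A
  | neg  : STerm A → STerm A
  | and  : STerm A → STerm A → STerm A
  | or   : STerm A → STerm A → STerm A

/-- Evaluation trees: finite binary trees over `A` with leaves `T`, `F`. -/
inductive ETree (A : Type) : Type
  | tru  : ETree A
  | fls  : ETree A
  | node : ETree A → A → ETree A → ETree A

namespace ETree

/-- `X.subst Y Z = X[T↦Y, F↦Z]`. -/
def subst {A : Type} : ETree A → ETree A → ETree A → ETree A
  | .tru, y, _ => y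
  | .fls, _, z => z
  | .node l a r, y, z => .node (subst l y z) a (subst r y z)

def hasTru {A : Type} : ETree A → Prop
  | .tru => True
  | .fls => False
  | .node l _ r => hasTru l ∨ hasTru r

def hasFls {A : Type} : ETree A → Prop
  | .tru => False
  | .fls => True
  | .node l _ r => hasFls l ∨ hasFls r

def depth {A : Type} : ETree A → ℕ
  | .tru => 0
  | .fls => 0
  | .node l _ r => 1 + max (depth l) (depth r)

end ETree

/-- The full evaluation function `fe : FTerm → 𝒯`. -/
def fe {A : Type} : FTerm A → ETree A
  | FTerm.tru => ETree.tru
  | FTerm.fls => ETree.fls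
  | FTerm.atom a => ETree.node ETree.tru a ETree.fls
  | FTerm.neg p => (fe p).subst ETree.fls ETree.tru
  | FTerm.and p q => (fe p).subst (fe q) ((fe q).subst ETree.fls ETree.fls)
  | FTerm.or p q => (fe p).subst ((fe q).subst ETree.tru ETree.tru) (fe q)

/-- The short-circuit evaluation function `se : STerm → 𝒯`. -/
def se {A : Type} : STerm A → ETree A
  | STerm.tru => ETree.tru
  | STerm.fls => ETree.fls
  | STerm.atom a => ETree.node ETree.tru a ETree.fls
  | STerm.neg p => (se p).subst ETree.fls ETree.tru
  | STerm.and p q => (se p).subst (se q) ETree.fls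
  | STerm.or p q => (se p).subst ETree.tru (se q)

/-- Derivability from EqFFEL by equational logic. -/
inductive EqFFEL {A : Type} : FTerm A → FTerm A → Prop
  | refl (p : FTerm A) : EqFFEL p p
  | symm {p q : FTerm A} : EqFFEL p q → EqFFEL q p
  | trans {p q r : FTerm A} : EqFFEL p q → EqFFEL q r → EqFFEL p r
  | neg_congr {p q : FTerm A} : EqFFEL p q → EqFFEL (FTerm.neg p) (FTerm.neg q)
  | and_congr {p p' q q' : FTerm A} :
      EqFFEL p p' → EqFFEL q q' → EqFFEL (FTerm.and p q) (FTerm.and p' q')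
  | or_congr {p p' q q' : FTerm A} :
      EqFFEL p p' → EqFFEL q q' → EqFFEL (FTerm.or p q) (FTerm.or p' q')
  | fel1 : EqFFEL FTerm.fls (FTerm.neg FTerm.tru)
  | fel2 (x y : FTerm A) : EqFFEL (FTerm.or x y) (FTerm.neg (FTerm.and (FTerm.neg x) (FTerm.neg y)))
  | fel3 (x : FTerm A) : EqFFEL (FTerm.neg (FTerm.neg x)) x
  | fel4 (x y z : FTerm A) : EqFFEL (FTerm.and (FTerm.and x y) z) (FTerm.and x (FTerm.and y z))
  | fel5 (x : FTerm A) : EqFFEL (FTerm.and FTerm.tru x) x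
  | fel6 (x : FTerm A) : EqFFEL (FTerm.and x FTerm.tru) x
  | fel7 (x : FTerm A) : EqFFEL (FTerm.and x FTerm.fls) (FTerm.and FTerm.fls x)
  | fel8 (x : FTerm A) : EqFFEL (FTerm.and x FTerm.fls) (FTerm.and (FTerm.neg x) FTerm.fls)
  | fel9 (x y : FTerm A) :
      EqFFEL (FTerm.or (FTerm.and x FTerm.fls) y) (FTerm.and (FTerm.or x FTerm.tru) y)
  | fel10 (x y : FTerm A) :
      EqFFEL (FTerm.or x (FTerm.and y FTerm.fls)) (FTerm.and x (FTerm.or y FTerm.tru))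

/-- Derivability from EqFSCL by equational logic. -/
inductive EqFSCL {A : Type} : STerm A → STerm A → Prop
  | refl (p : STerm A) : EqFSCL p p
  | symm {p q : STerm A} : EqFSCL p q → EqFSCL q p
  | trans {p q r : STerm A} : EqFSCL p q → EqFSCL q r → EqFSCL p r
  | neg_congr {p q : STerm A} : EqFSCL p q → EqFSCL (STerm.neg p) (STerm.neg q)
  | and_congr {p p' q q' : STerm A} :
      EqFSCL p p' → EqFSCL q q' → EqFSCL (STerm.and p q) (STerm.and p' q')
  | or_congr {p p' q q' : STerm A} :
      EqFSCL p p' → EqFSCL q q' → EqFSCL (STerm.or p q) (STerm.or p' q')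
  | scl1 : EqFSCL STerm.fls (STerm.neg STerm.tru)
  | scl2 (x y : STerm A) : EqFSCL (STerm.or x y) (STerm.neg (STerm.and (STerm.neg x) (STerm.neg y)))
  | scl3 (x : STerm A) : EqFSCL (STerm.neg (STerm.neg x)) x
  | scl4 (x y z : STerm A) : EqFSCL (STerm.and (STerm.and x y) z) (STerm.and x (STerm.and y z))
  | scl5 (x : STerm A) : EqFSCL (STerm.and STerm.tru x) x
  | scl6 (x : STerm A) : EqFSCL (STerm.and x STerm.tru) x
  | scl7 (x : STerm A) : EqFSCL (STerm.and STerm.fls x) STerm.fls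
  | scl8 (x : STerm A) : EqFSCL (STerm.and x STerm.fls) (STerm.and (STerm.neg x) STerm.fls)
  | scl9 (x y : STerm A) :
      EqFSCL (STerm.or (STerm.and x STerm.fls) y) (STerm.and (STerm.or x STerm.tru) y)
  | scl10 (x y z : STerm A) :
      EqFSCL (STerm.or (STerm.and x y) (STerm.and z STerm.fls))
             (STerm.and (STerm.or x (STerm.and z STerm.fls)) (STerm.or y (STerm.and z STerm.fls)))

/-! ### FEL Normal Form grammar -/

/-- T-terms: `P^T ::= T | a ∨• P^T`. -/
inductive IsFT_T {A : Type} : FTerm A → Prop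
  | tru : IsFT_T FTerm.tru
  | or (a : A) {p : FTerm A} : IsFT_T p → IsFT_T (FTerm.or (FTerm.atom a) p)

/-- F-terms: `P^F ::= F | a ∧• P^F`. -/
inductive IsFT_F {A : Type} : FTerm A → Prop
  | fls : IsFT_F FTerm.fls
  | and (a : A) {p : FTerm A} : IsFT_F p → IsFT_F (FTerm.and (FTerm.atom a) p)

/-- ℓ-terms: `P^ℓ ::= a ∧• P^T | ¬a ∧• P^T`. -/
inductive IsFT_L {A : Type} : FTerm A → Prop
  | pos (a : A) {p : FTerm A} : IsFT_T p → IsFT_L (FTerm.and (FTerm.atom a) p)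
  | neg (a : A) {p : FTerm A} : IsFT_T p → IsFT_L (FTerm.and (FTerm.neg (FTerm.atom a)) p)

mutual
/-- `P^c ::= P^ℓ | P^* ∧• P^d`. -/
inductive IsFT_C {A : Type} : FTerm A → Prop
  | ell {p : FTerm A} : IsFT_L p → IsFT_C p
  | and {p q : FTerm A} : IsFT_Star p → IsFT_D q → IsFT_C (FTerm.and p q)
/-- `P^d ::= P^ℓ | P^* ∨• P^c`. -/
inductive IsFT_D {A : Type} : FTerm A → Prop
  | ell {p : FTerm A} : IsFT_L p → IsFT_D p
  | or {p q : FTerm A} : IsFT_Star p → IsFT_C q → IsFT_D (FTerm.or p q)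
/-- `P^* ::= P^c | P^d`. -/
inductive IsFT_Star {A : Type} : FTerm A → Prop
  | c {p : FTerm A} : IsFT_C p → IsFT_Star p
  | d {p : FTerm A} : IsFT_D p → IsFT_Star p
end

/-- FEL Normal Form: `P ::= P^T | P^F | P^T ∧• P^*`. -/
inductive IsFNF {A : Type} : FTerm A → Prop
  | t {p : FTerm A} : IsFT_T p → IsFNF p
  | f {p : FTerm A} : IsFT_F p → IsFNF p
  | ts {p q : FTerm A} : IsFT_T p → IsFT_Star q → IsFNF (FTerm.and p q)

/-! ### SCL Normal Form grammar -/

/-- T-terms: `P^T ::= T | (a ∧◦ P^T) ∨◦ P^T`. -/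
inductive IsST_T {A : Type} : STerm A → Prop
  | tru : IsST_T STerm.tru
  | or (a : A) {p q : STerm A} :
      IsST_T p → IsST_T q → IsST_T (STerm.or (STerm.and (STerm.atom a) p) q)

/-- F-terms: `P^F ::= F | (a ∨◦ P^F) ∧◦ P^F`. -/
inductive IsST_F {A : Type} : STerm A → Prop
  | fls : IsST_F STerm.fls
  | and (a : A) {p q : STerm A} :
      IsST_F p → IsST_F q → IsST_F (STerm.and (STerm.or (STerm.atom a) p) q)

/-- ℓ-terms: `P^ℓ ::= (a ∧◦ P^T) ∨◦ P^F | (¬a ∧◦ P^T) ∨◦ P^F`. -/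
inductive IsST_L {A : Type} : STerm A → Prop
  | pos (a : A) {p q : STerm A} :
      IsST_T p → IsST_F q → IsST_L (STerm.or (STerm.and (STerm.atom a) p) q)
  | neg (a : A) {p q : STerm A} :
      IsST_T p → IsST_F q → IsST_L (STerm.or (STerm.and (STerm.neg (STerm.atom a)) p) q)

mutual
/-- `P^c ::= P^ℓ | P^* ∧◦ P^d`. -/
inductive IsST_C {A : Type} : STerm A → Prop
  | ell {p : STerm A} : IsST_L p → IsST_C p
  | and {p q : STerm A} : IsST_Star p → IsST_D q → IsST_C (STerm.and p q)
/-- `P^d ::= P^ℓ | P^* ∨◦ P^c`. -/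
inductive IsST_D {A : Type} : STerm A → Prop
  | ell {p : STerm A} : IsST_L p → IsST_D p
  | or {p q : STerm A} : IsST_Star p → IsST_C q → IsST_D (STerm.or p q)
/-- `P^* ::= P^c | P^d`. -/
inductive IsST_Star {A : Type} : STerm A → Prop
  | c {p : STerm A} : IsST_C p → IsST_Star p
  | d {p : STerm A} : IsST_D p → IsST_Star p
end

/-- SCL Normal Form: `P ::= P^T | P^F | P^T ∧◦ P^*`. -/
inductive IsSNF {A : Type} : STerm A → Prop
  | t {p : STerm A} : IsST_T p → IsSNF p
  | f {p : STerm A} : IsST_F p → IsSNF p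
  | ts {p q : STerm A} : IsST_T p → IsST_Star q → IsSNF (STerm.and p q)

/-! ### Trees with box leaves -/

/-- `𝒯_□`: trees over `A` with leaves in `{T, F, □}`. -/
inductive ETreeB (A : Type) : Type
  | tru  : ETreeB A
  | fls  : ETreeB A
  | box  : ETreeB A
  | node : ETreeB A → A → ETreeB A → ETreeB A

namespace ETreeB

/-- `X.substBox Y = X[□↦Y]`. -/
def substBox {A : Type} : ETreeB A → ETree A → ETree A
  | .tru, _ => ETree.tru
  | .fls, _ => ETree.fls
  | .box, y => y
  | .node l a r, y => ETree.node (substBox l y) a (substBox r y)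

def hasBox {A : Type} : ETreeB A → Prop
  | .tru => False
  | .fls => False
  | .box => True
  | .node l _ r => hasBox l ∨ hasBox r

def hasTru {A : Type} : ETreeB A → Prop
  | .tru => True
  | .fls => False
  | .box => False
  | .node l _ r => hasTru l ∨ hasTru r

def hasFls {A : Type} : ETreeB A → Prop
  | .tru => False
  | .fls => True
  | .box => False
  | .node l _ r => hasFls l ∨ hasFls r

end ETreeB

/-- `𝒯_{1,2}`: trees over `A` with leaves in `{T, F, □₁, □₂}`. -/
inductive ETree2 (A : Type) : Type
  | tru  : ETree2 A
  | fls  : ETree2 A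
  | box1 : ETree2 A
  | box2 : ETree2 A
  | node : ETree2 A → A → ETree2 A → ETree2 A

namespace ETree2

/-- `X.substBoxes Y Z = X[□₁↦Y, □₂↦Z]`. -/
def substBoxes {A : Type} : ETree2 A → ETree A → ETree A → ETree A
  | .tru, _, _ => ETree.tru
  | .fls, _, _ => ETree.fls
  | .box1, y, _ => y
  | .box2, _, z => z
  | .node l a r, y, z => ETree.node (substBoxes l y z) a (substBoxes r y z)

def hasBox1 {A : Type} : ETree2 A → Prop
  | .tru => False
  | .fls => False
  | .box1 => True
  | .box2 => False
  | .node l _ r => hasBox1 l ∨ hasBox1 r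

def hasBox2 {A : Type} : ETree2 A → Prop
  | .tru => False
  | .fls => False
  | .box1 => False
  | .box2 => True
  | .node l _ r => hasBox2 l ∨ hasBox2 r

def hasTru {A : Type} : ETree2 A → Prop
  | .tru => True
  | .fls => False
  | .box1 => False
  | .box2 => False
  | .node l _ r => hasTru l ∨ hasTru r

def hasFls {A : Type} : ETree2 A → Prop
  | .tru => False
  | .fls => True
  | .box1 => False
  | .box2 => False
  | .node l _ r => hasFls l ∨ hasFls r

end ETree2

namespace ETree

/-- `X[T↦□₁, F↦□₂]`. -/
def toBoxes {A : Type} : ETree A → ETree2 A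
  | .tru => ETree2.box1
  | .fls => ETree2.box2
  | .node l a r => ETree2.node (toBoxes l) a (toBoxes r)

/-- `X[T↦□]`. -/
def truToBox {A : Type} : ETree A → ETreeB A
  | .tru => ETreeB.box
  | .fls => ETreeB.fls
  | .node l a r => ETreeB.node (truToBox l) a (truToBox r)

/-- `X[F↦□]`. -/
def flsToBox {A : Type} : ETree A → ETreeB A
  | .tru => ETreeB.tru
  | .fls => ETreeB.box
  | .node l a r => ETreeB.node (flsToBox l) a (flsToBox r)

end ETree

/-! ### FEL decompositions -/

/-- Candidate conjunction decomposition (FEL):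
    `X = Y[□₁↦Z, □₂↦Z[T↦F]]`, `Y` contains both boxes, neither `T` nor `F`,
    and `Z` contains both `T` and `F`. -/
def IsCcdF {A : Type} (X : ETree A) (Y : ETree2 A) (Z : ETree A) : Prop :=
  X = Y.substBoxes Z (Z.subst ETree.fls ETree.fls) ∧
  Y.hasBox1 ∧ Y.hasBox2 ∧ ¬ Y.hasTru ∧ ¬ Y.hasFls ∧ Z.hasTru ∧ Z.hasFls

/-- Candidate disjunction decomposition (FEL):
    `X = Y[□₁↦Z[F↦T], □₂↦Z]` with the same side conditions. -/
def IsCddF {A : Type} (X : ETree A) (Y : ETree2 A) (Z : ETree A) : Prop :=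
  X = Y.substBoxes (Z.subst ETree.tru ETree.tru) Z ∧
  Y.hasBox1 ∧ Y.hasBox2 ∧ ¬ Y.hasTru ∧ ¬ Y.hasFls ∧ Z.hasTru ∧ Z.hasFls

/-- Conjunction decomposition (FEL): a ccd with `Z` of minimal depth. -/
def IsCdF {A : Type} (X : ETree A) (Y : ETree2 A) (Z : ETree A) : Prop :=
  IsCcdF X Y Z ∧ ∀ (Y' : ETree2 A) (Z' : ETree A), IsCcdF X Y' Z' → Z.depth ≤ Z'.depth

/-- Disjunction decomposition (FEL): a cdd with `Z` of minimal depth. -/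
def IsDdF {A : Type} (X : ETree A) (Y : ETree2 A) (Z : ETree A) : Prop :=
  IsCddF X Y Z ∧ ∀ (Y' : ETree2 A) (Z' : ETree A), IsCddF X Y' Z' → Z.depth ≤ Z'.depth

/-- T-*-decomposition (FEL): `X = Y[□↦Z]`, `Y` contains neither `T` nor `F`,
    and `Z` admits no nontrivial box decomposition. -/
def IsTsdF {A : Type} (X : ETree A) (Y : ETreeB A) (Z : ETree A) : Prop :=
  X = Y.substBox Z ∧ ¬ Y.hasTru ∧ ¬ Y.hasFls ∧
  ¬ ∃ (U : ETreeB A) (V : ETree A),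
      Z = U.substBox V ∧ U.hasBox ∧ U ≠ ETreeB.box ∧ ¬ U.hasTru ∧ ¬ U.hasFls

/-! ### SCL decompositions -/

/-- Candidate conjunction decomposition (SCL): `X = Y[□↦Z]`, `Y` contains `□`,
    `Y` contains `F` but not `T`, and `Z` contains both `T` and `F`. -/
def IsCcdS {A : Type} (X : ETree A) (Y : ETreeB A) (Z : ETree A) : Prop :=
  X = Y.substBox Z ∧ Y.hasBox ∧ Y.hasFls ∧ ¬ Y.hasTru ∧ Z.hasTru ∧ Z.hasFls

/-- Candidate disjunction decomposition (SCL): `X = Y[□↦Z]`, `Y` contains `□`,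
    `Y` contains `T` but not `F`, and `Z` contains both `T` and `F`. -/
def IsCddS {A : Type} (X : ETree A) (Y : ETreeB A) (Z : ETree A) : Prop :=
  X = Y.substBox Z ∧ Y.hasBox ∧ Y.hasTru ∧ ¬ Y.hasFls ∧ Z.hasTru ∧ Z.hasFls

/-- Conjunction decomposition (SCL): a ccd with `Z` of minimal depth. -/
def IsCdS {A : Type} (X : ETree A) (Y : ETreeB A) (Z : ETree A) : Prop :=
  IsCcdS X Y Z ∧ ∀ (Y' : ETreeB A) (Z' : ETree A), IsCcdS X Y' Z' → Z.depth ≤ Z'.depth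

/-- Disjunction decomposition (SCL): a cdd with `Z` of minimal depth. -/
def IsDdS {A : Type} (X : ETree A) (Y : ETreeB A) (Z : ETree A) : Prop :=
  IsCddS X Y Z ∧ ∀ (Y' : ETreeB A) (Z' : ETree A), IsCddS X Y' Z' → Z.depth ≤ Z'.depth

/-- Candidate T-*-decomposition (SCL). -/
def IsCtsdS {A : Type} (X : ETree A) (Y : ETreeB A) (Z : ETree A) : Prop :=
  X = Y.substBox Z ∧ ¬ Y.hasTru ∧ ¬ Y.hasFls ∧
  ¬ ∃ (U : ETreeB A) (V : ETree A),
      Z = U.substBox V ∧ U.hasBox ∧ U ≠ ETreeB.box ∧ ¬ U.hasTru ∧ ¬ U.hasFls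

/-- T-*-decomposition (SCL): a ctsd with `Z` of minimal depth. -/
def IsTsdS {A : Type} (X : ETree A) (Y : ETreeB A) (Z : ETree A) : Prop :=
  IsCtsdS X Y Z ∧ ∀ (Y' : ETreeB A) (Z' : ETree A), IsCtsdS X Y' Z' → Z.depth ≤ Z'.depth

/-- The translation `h : FTerm → STerm` from FEL-terms to SCL-terms. -/
def hTrans {A : Type} : FTerm A → STerm A
  | FTerm.tru => STerm.tru
  | FTerm.fls => STerm.fls
  | FTerm.atom a => STerm.atom a
  | FTerm.neg p => STerm.neg (hTrans p)
  | FTerm.and p q => STerm.and (STerm.or (hTrans p) (STerm.and (hTrans q) STerm.fls)) (hTrans q)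
  | FTerm.or p q => STerm.or (STerm.and (hTrans p) (STerm.or (hTrans q) STerm.tru)) (hTrans q)

/-! Every SCL-term is EqFSCL-equal to a term in SCL normal form: a T-term, an F-term, or a
T-term followed by a `*`-term, where `*`-terms are built from literal terms `(ℓ ∧◦ P^T) ∨◦ P^F`
by `∧◦` and `∨◦`, the right argument of a conjunction never being a conjunction and that of a
disjunction never a disjunction. The normal form is computed by recursion on the term, each step
being justified by derived equations; as `se` is invariant under EqFSCL, completeness reduces to
injectivity of `se` on normal forms. That rests on a Levi lemma for grafting: if
`Y[T↦Z] = Y'[T↦Z']` and `Y` contains `T`, then one of `Z`, `Z'` is a graft of the other.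
Together with a depth comparison showing that no tree is both a `T`-graft and an `F`-graft of
trees containing both leaves, it lets the tree of a normal form be decomposed in only one way. -/

section Completeness

variable {A : Type}

local infixl:65 " ∧◦ " => STerm.and
local infixl:60 " ∨◦ " => STerm.or
local prefix:100 "∼" => STerm.neg
local infix:45 " ≐ " => EqFSCL
local notation:max X:max "[T↦" Z "]" => ETree.subst X Z ETree.fls
local notation:max X:max "[F↦" Z "]" => ETree.subst X ETree.tru Z

open STerm

instance : Trans (@EqFSCL A) (@EqFSCL A) (@EqFSCL A) := ⟨EqFSCL.trans⟩

namespace EqFSCL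

theorem and_left {p p' q : STerm A} (h : p ≐ p') : p ∧◦ q ≐ p' ∧◦ q := and_congr h (refl q)
theorem and_right {p q q' : STerm A} (h : q ≐ q') : p ∧◦ q ≐ p ∧◦ q' := and_congr (refl p) h
theorem or_left {p p' q : STerm A} (h : p ≐ p') : p ∨◦ q ≐ p' ∨◦ q := or_congr h (refl q)
theorem or_right {p q q' : STerm A} (h : q ≐ q') : p ∨◦ q ≐ p ∨◦ q' := or_congr (refl p) h

theorem neg_tru : (∼tru : STerm A) ≐ fls := scl1.symm
theorem neg_fls : (∼fls : STerm A) ≐ tru := (neg_congr scl1).trans (scl3 _)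

theorem neg_or (x y : STerm A) : ∼(x ∨◦ y) ≐ ∼x ∧◦ ∼y := (neg_congr (scl2 x y)).trans (scl3 _)

theorem neg_and (x y : STerm A) : ∼(x ∧◦ y) ≐ ∼x ∨◦ ∼y :=
  ((scl2 _ _).trans (neg_congr (and_congr (scl3 x) (scl3 y)))).symm

theorem or_assoc (x y z : STerm A) : (x ∨◦ y) ∨◦ z ≐ x ∨◦ (y ∨◦ z) :=
  calc (x ∨◦ y) ∨◦ z ≐ ∼(∼(x ∨◦ y) ∧◦ ∼z) := scl2 _ _
    _ ≐ ∼((∼x ∧◦ ∼y) ∧◦ ∼z) := neg_congr (and_left (neg_or x y))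
    _ ≐ ∼(∼x ∧◦ (∼y ∧◦ ∼z)) := neg_congr (scl4 _ _ _)
    _ ≐ ∼(∼x ∧◦ ∼(y ∨◦ z)) := neg_congr (and_right (neg_or y z).symm)
    _ ≐ x ∨◦ (y ∨◦ z) := (scl2 _ _).symm

theorem or_fls (x : STerm A) : x ∨◦ fls ≐ x :=
  calc x ∨◦ fls ≐ ∼(∼x ∧◦ ∼fls) := scl2 _ _
    _ ≐ ∼(∼x ∧◦ tru) := neg_congr (and_right neg_fls)
    _ ≐ x := (neg_congr (scl6 _)).trans (scl3 x)

theorem fls_or (x : STerm A) : fls ∨◦ x ≐ x :=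
  calc fls ∨◦ x ≐ ∼(∼fls ∧◦ ∼x) := scl2 _ _
    _ ≐ ∼(tru ∧◦ ∼x) := neg_congr (and_left neg_fls)
    _ ≐ x := (neg_congr (scl5 _)).trans (scl3 x)

theorem tru_or (x : STerm A) : tru ∨◦ x ≐ tru :=
  calc tru ∨◦ x ≐ ∼(∼tru ∧◦ ∼x) := scl2 _ _
    _ ≐ ∼(fls ∧◦ ∼x) := neg_congr (and_left neg_tru)
    _ ≐ tru := (neg_congr (scl7 _)).trans neg_fls

theorem or_tru (x : STerm A) : x ∨◦ tru ≐ ∼(∼x ∧◦ fls) :=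
  (scl2 _ _).trans (neg_congr (and_right neg_tru))

theorem or_tru_eq_neg_or_tru (x : STerm A) : x ∨◦ tru ≐ ∼x ∨◦ tru :=
  calc x ∨◦ tru ≐ ∼(∼x ∧◦ fls) := or_tru x
    _ ≐ ∼(∼∼x ∧◦ fls) := neg_congr (scl8 _)
    _ ≐ ∼x ∨◦ tru := (or_tru _).symm

theorem neg_and_fls (z : STerm A) : ∼(z ∧◦ fls) ≐ ∼z ∨◦ tru :=
  (neg_and _ _).trans (or_right neg_fls)

/-- The dual of `scl10`: negate `scl10` at `∼x`, `∼y`, `∼z`. -/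
theorem and_or_tru_distrib (x y z : STerm A) :
    (x ∨◦ y) ∧◦ (z ∨◦ tru) ≐ (x ∧◦ (z ∨◦ tru)) ∨◦ (y ∧◦ (z ∨◦ tru)) := by
  have hz : ∼(∼z ∧◦ fls) ≐ z ∨◦ tru := (neg_and_fls _).trans (or_left (scl3 z))
  have piece (w : STerm A) : ∼(∼w ∨◦ (∼z ∧◦ fls)) ≐ w ∧◦ (z ∨◦ tru) :=
    (neg_or _ _).trans (and_congr (scl3 w) hz)
  calc (x ∨◦ y) ∧◦ (z ∨◦ tru)
      ≐ ∼((∼x ∧◦ ∼y) ∨◦ (∼z ∧◦ fls)) :=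
        ((neg_or _ _).trans (and_congr ((neg_and _ _).trans
          (or_congr (scl3 x) (scl3 y))) hz)).symm
    _ ≐ ∼((∼x ∨◦ (∼z ∧◦ fls)) ∧◦ (∼y ∨◦ (∼z ∧◦ fls))) := neg_congr (scl10 _ _ _)
    _ ≐ (x ∧◦ (z ∨◦ tru)) ∨◦ (y ∧◦ (z ∨◦ tru)) := (neg_and _ _).trans (or_congr (piece x) (piece y))

end EqFSCL

def STerm.dual : STerm A → STerm A
  | .atom a => .atom a
  | .tru => .fls
  | .fls => .tru
  | .neg p => .neg p.dual
  | .and p q => .or p.dual q.dual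
  | .or p q => .and p.dual q.dual

theorem EqFSCL.dual {p q : STerm A} (h : p ≐ q) : p.dual ≐ q.dual := by
  induction h with
  | refl p => exact refl _
  | symm _ ih => exact ih.symm
  | trans _ _ ih₁ ih₂ => exact ih₁.trans ih₂
  | neg_congr _ ih => exact neg_congr ih
  | and_congr _ _ ih₁ ih₂ => exact or_congr ih₁ ih₂
  | or_congr _ _ ih₁ ih₂ => exact and_congr ih₁ ih₂
  | scl1 => exact neg_fls.symm
  | scl2 x y => exact ((neg_or _ _).trans (and_congr (scl3 _) (scl3 _))).symm
  | scl3 x => exact scl3 _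
  | scl4 x y z => exact or_assoc _ _ _
  | scl5 x => exact fls_or _
  | scl6 x => exact or_fls _
  | scl7 x => exact tru_or _
  | scl8 x => exact or_tru_eq_neg_or_tru _
  | scl9 x y => exact (scl9 _ _).symm
  | scl10 x y z => exact and_or_tru_distrib _ _ _

/-- Satisfied by the T-terms of the normal form, whose evaluation trees have only `T`-leaves. -/
abbrev AbsorbsT (t : STerm A) : Prop := t ∨◦ tru ≐ t

/-- Satisfied by the F-terms of the normal form, whose evaluation trees have only `F`-leaves. -/
abbrev AbsorbsF (f : STerm A) : Prop := f ∧◦ fls ≐ f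

open EqFSCL

theorem AbsorbsF.and_eq {f : STerm A} (hf : AbsorbsF f) (x : STerm A) : f ∧◦ x ≐ f :=
  calc f ∧◦ x ≐ (f ∧◦ fls) ∧◦ x := and_left hf.symm
    _ ≐ f ∧◦ (fls ∧◦ x) := scl4 _ _ _
    _ ≐ f := (and_right (scl7 _)).trans hf

theorem AbsorbsT.or_eq {t : STerm A} (ht : AbsorbsT t) (x : STerm A) : t ∨◦ x ≐ t :=
  calc t ∨◦ x ≐ (t ∨◦ tru) ∨◦ x := or_left ht.symm
    _ ≐ t ∨◦ (tru ∨◦ x) := or_assoc _ _ _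
    _ ≐ t := (or_right (tru_or _)).trans ht

theorem AbsorbsT.neg_eq {t : STerm A} (ht : AbsorbsT t) : ∼t ≐ t ∧◦ fls :=
  calc ∼t ≐ ∼(t ∨◦ tru) := neg_congr ht.symm
    _ ≐ ∼t ∧◦ ∼tru := neg_or _ _
    _ ≐ ∼t ∧◦ fls := and_right neg_tru
    _ ≐ t ∧◦ fls := (scl8 t).symm

theorem AbsorbsF.neg_eq {f : STerm A} (hf : AbsorbsF f) : ∼f ≐ f ∨◦ tru :=
  calc ∼f ≐ ∼(f ∧◦ fls) := neg_congr hf.symm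
    _ ≐ ∼f ∨◦ tru := neg_and_fls f
    _ ≐ f ∨◦ tru := (or_tru_eq_neg_or_tru f).symm

theorem AbsorbsF.and_or_distrib {f : STerm A} (hf : AbsorbsF f) (x y : STerm A) :
    (x ∧◦ y) ∨◦ f ≐ (x ∨◦ f) ∧◦ (y ∨◦ f) :=
  calc (x ∧◦ y) ∨◦ f ≐ (x ∧◦ y) ∨◦ (f ∧◦ fls) := or_right hf.symm
    _ ≐ (x ∨◦ (f ∧◦ fls)) ∧◦ (y ∨◦ (f ∧◦ fls)) := scl10 _ _ _
    _ ≐ (x ∨◦ f) ∧◦ (y ∨◦ f) := and_congr (or_right hf) (or_right hf)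

theorem AbsorbsT.or_and_distrib {t : STerm A} (ht : AbsorbsT t) (x y : STerm A) :
    (x ∨◦ y) ∧◦ t ≐ (x ∧◦ t) ∨◦ (y ∧◦ t) :=
  calc (x ∨◦ y) ∧◦ t ≐ (x ∨◦ y) ∧◦ (t ∨◦ tru) := and_right ht.symm
    _ ≐ (x ∧◦ (t ∨◦ tru)) ∨◦ (y ∧◦ (t ∨◦ tru)) := and_or_tru_distrib _ _ _
    _ ≐ (x ∧◦ t) ∨◦ (y ∧◦ t) := or_congr (and_right ht) (and_right ht)

theorem AbsorbsT.and_eq_or {t : STerm A} (ht : AbsorbsT t) (y : STerm A) :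
    t ∧◦ y ≐ (t ∧◦ fls) ∨◦ y :=
  (and_left ht.symm).trans (scl9 t y).symm

theorem EqFSCL.or_and_fls (u v : STerm A) : (u ∨◦ v) ∧◦ fls ≐ ∼u ∧◦ (v ∧◦ fls) :=
  calc (u ∨◦ v) ∧◦ fls ≐ ∼(u ∨◦ v) ∧◦ fls := scl8 _
    _ ≐ (∼u ∧◦ ∼v) ∧◦ fls := and_left (neg_or _ _)
    _ ≐ ∼u ∧◦ (∼v ∧◦ fls) := scl4 _ _ _
    _ ≐ ∼u ∧◦ (v ∧◦ fls) := and_right (scl8 v).symm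

theorem AbsorbsF.or_and_fls {g : STerm A} (hg : AbsorbsF g) (x : STerm A) :
    (x ∨◦ g) ∧◦ fls ≐ ∼x ∧◦ g :=
  (EqFSCL.or_and_fls _ _).trans (and_right hg)

theorem AbsorbsF.or_and_eq {f : STerm A} (hf : AbsorbsF f) (x y : STerm A) :
    (x ∨◦ y) ∧◦ f ≐ (∼x ∨◦ f) ∧◦ (y ∧◦ f) :=
  calc (x ∨◦ y) ∧◦ f ≐ ((x ∨◦ y) ∧◦ f) ∧◦ fls := (and_right hf.symm).trans (scl4 _ _ _).symm
    _ ≐ (∼(x ∨◦ y) ∨◦ ∼f) ∧◦ fls := (scl8 _).trans (and_left (neg_and _ _))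
    _ ≐ (((∼x ∧◦ ∼y) ∨◦ f) ∨◦ tru) ∧◦ fls :=
        and_left ((or_congr (neg_or _ _) hf.neg_eq).trans (or_assoc _ _ _).symm)
    _ ≐ ((∼x ∧◦ ∼y) ∨◦ f) ∧◦ fls := (scl9 _ _).symm.trans (or_fls _)
    _ ≐ (∼x ∨◦ f) ∧◦ ((∼y ∨◦ f) ∧◦ fls) := (and_left (hf.and_or_distrib _ _)).trans (scl4 _ _ _)
    _ ≐ (∼x ∨◦ f) ∧◦ (y ∧◦ f) := and_right ((hf.or_and_fls _).trans (and_left (scl3 _)))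

theorem AbsorbsF.or_and_absorb {f : STerm A} (hf : AbsorbsF f) (x y : STerm A) :
    (x ∨◦ y) ∧◦ f ≐ (x ∨◦ (y ∧◦ f)) ∧◦ f :=
  calc (x ∨◦ y) ∧◦ f ≐ (∼x ∨◦ f) ∧◦ (y ∧◦ f) := hf.or_and_eq _ _
    _ ≐ (∼x ∨◦ f) ∧◦ ((y ∧◦ f) ∧◦ f) :=
        and_right ((and_right (hf.and_eq f)).symm.trans (scl4 _ _ _).symm)
    _ ≐ (x ∨◦ (y ∧◦ f)) ∧◦ f := (hf.or_and_eq _ _).symm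

theorem EqFSCL.neg_or_and_comm {q g : STerm A} (hq : AbsorbsF q) (hg : AbsorbsF g) (x : STerm A) :
    (∼x ∨◦ q) ∧◦ g ≐ (x ∨◦ g) ∧◦ q :=
  calc (∼x ∨◦ q) ∧◦ g ≐ ((∼x ∨◦ q) ∧◦ g) ∧◦ fls := (and_right hg.symm).trans (scl4 _ _ _).symm
    _ ≐ (∼(∼x ∨◦ q) ∨◦ ∼g) ∧◦ fls := (scl8 _).trans (and_left (neg_and _ _))
    _ ≐ (((x ∧◦ (q ∨◦ tru)) ∨◦ g) ∨◦ tru) ∧◦ fls :=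
        and_left ((or_congr ((neg_or _ _).trans (and_congr (scl3 _) hq.neg_eq)) hg.neg_eq).trans
          (or_assoc _ _ _).symm)
    _ ≐ ((x ∧◦ (q ∨◦ tru)) ∨◦ g) ∧◦ fls := (scl9 _ _).symm.trans (or_fls _)
    _ ≐ ((x ∨◦ g) ∧◦ ((q ∨◦ tru) ∨◦ g)) ∧◦ fls := and_left (hg.and_or_distrib _ _)
    _ ≐ (x ∨◦ g) ∧◦ ((q ∨◦ tru) ∧◦ fls) :=
        (and_left (and_right ((or_assoc _ _ _).trans (or_right (tru_or _))))).trans (scl4 _ _ _)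
    _ ≐ (x ∨◦ g) ∧◦ q := and_right ((scl9 _ _).symm.trans ((or_fls _).trans hq))

theorem AbsorbsT.and_or_eq {p q : STerm A} (hp : AbsorbsT p) (hq : AbsorbsF q) (x : STerm A) :
    (x ∧◦ p) ∨◦ q ≐ (x ∨◦ q) ∧◦ p :=
  calc (x ∧◦ p) ∨◦ q ≐ (x ∨◦ q) ∧◦ (p ∨◦ q) := hq.and_or_distrib _ _
    _ ≐ (x ∨◦ q) ∧◦ p := and_right (hp.or_eq q)

/-- The T-terms `P^T` of the normal form. -/
inductive TForm (A : Type) : Type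
  | tru : TForm A
  | node : A → TForm A → TForm A → TForm A

/-- The F-terms `P^F` of the normal form. -/
inductive FForm (A : Type) : Type
  | fls : FForm A
  | node : A → FForm A → FForm A → FForm A

/-- The `*`-terms of the normal form: `lit b a p q` is the literal term `(ℓ ∧◦ p) ∨◦ q`,
where `ℓ` is `¬a` if `b` holds and `a` otherwise. -/
inductive StarForm (A : Type) : Type
  | lit : Bool → A → TForm A → FForm A → StarForm A
  | and : StarForm A → StarForm A → StarForm A
  | or : StarForm A → StarForm A → StarForm A

/-- Normal forms `P^T`, `P^F` and `P^T ∧◦ P^*`. -/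
inductive NormalForm (A : Type) : Type
  | t : TForm A → NormalForm A
  | f : FForm A → NormalForm A
  | ts : TForm A → StarForm A → NormalForm A

def TForm.toSTerm : TForm A → STerm A
  | .tru => .tru
  | .node a p q => (.atom a ∧◦ p.toSTerm) ∨◦ q.toSTerm

def FForm.toSTerm : FForm A → STerm A
  | .fls => .fls
  | .node a u v => (.atom a ∨◦ u.toSTerm) ∧◦ v.toSTerm

def StarForm.literal (b : Bool) (a : A) : STerm A := if b then ∼(.atom a) else .atom a

def StarForm.toSTerm : StarForm A → STerm A
  | .lit b a p q => (literal b a ∧◦ p.toSTerm) ∨◦ q.toSTerm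
  | .and s t => s.toSTerm ∧◦ t.toSTerm
  | .or s t => s.toSTerm ∨◦ t.toSTerm

def NormalForm.toSTerm : NormalForm A → STerm A
  | .t p => p.toSTerm
  | .f q => q.toSTerm
  | .ts p s => p.toSTerm ∧◦ s.toSTerm

/-- The `P^d` of the grammar: not a conjunction. -/
def StarForm.IsDisj : StarForm A → Prop
  | .and _ _ => False
  | _ => True

/-- The `P^c` of the grammar: not a disjunction. -/
def StarForm.IsConj : StarForm A → Prop
  | .or _ _ => False
  | _ => True

def StarForm.WF : StarForm A → Prop
  | .lit _ _ _ _ => True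
  | .and s t => s.WF ∧ t.WF ∧ t.IsDisj
  | .or s t => s.WF ∧ t.WF ∧ t.IsConj

def NormalForm.WF : NormalForm A → Prop
  | .ts _ s => s.WF
  | _ => True

def FForm.or : FForm A → FForm A → FForm A
  | .fls, g => g
  | .node a u v, g => .node a (u.or g) (v.or g)

def TForm.and : TForm A → TForm A → TForm A
  | .tru, t => t
  | .node a p q, t => .node a (p.and t) (q.and t)

def TForm.andF : TForm A → FForm A → FForm A
  | .tru, f => f
  | .node a p q, f => .node a (q.andF f) (p.andF f)

def FForm.orT : FForm A → TForm A → TForm A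
  | .fls, t => t
  | .node a u v, t => .node a (v.orT t) (u.orT t)

def TForm.neg (t : TForm A) : FForm A := t.andF .fls

def FForm.neg (f : FForm A) : TForm A := f.orT .tru

def StarForm.neg : StarForm A → StarForm A
  | .lit b a p q => .lit (!b) a q.neg p.neg
  | .and s t => .or s.neg t.neg
  | .or s t => .and s.neg t.neg

def StarForm.andT : StarForm A → TForm A → StarForm A
  | .lit b a p q, t => .lit b a (p.and t) q
  | .and s u, t => .and s (u.andT t)
  | .or s u, t => .or (s.andT t) (u.andT t)

/-- The F-form whose evaluation tree is that of `s` with `T ↦ f` and `F ↦ g`. -/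
def StarForm.subst : StarForm A → FForm A → FForm A → FForm A
  | .lit false a p q, f, g => .node a (q.or g) (p.andF f)
  | .lit true a p q, f, g => .node a (p.andF f) (q.or g)
  | .and s t, f, g => s.subst (t.subst f g) g
  | .or s t, f, g => s.subst f (t.subst f g)

def StarForm.andF (s : StarForm A) (f : FForm A) : FForm A := s.subst f .fls

/-- Conjunction of `*`-forms, reassociated so that no right argument of `and` is an `and`. -/
def StarForm.andStar : StarForm A → StarForm A → StarForm A
  | x, .and s t => (x.andStar s).andStar t
  | x, s => .and x s

def NormalForm.neg : NormalForm A → NormalForm A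
  | .t p => .f p.neg
  | .f q => .t q.neg
  | .ts p s => .ts p s.neg

def NormalForm.and : NormalForm A → NormalForm A → NormalForm A
  | .f p, _ => .f p
  | .t p, .t q => .t (p.and q)
  | .t p, .f q => .f (p.andF q)
  | .t p, .ts q s => .ts (p.and q) s
  | .ts p s, .t q => .ts p (s.andT q)
  | .ts p s, .f q => .f (p.andF (s.andF q))
  | .ts p s, .ts q s' => .ts p ((s.andT q).andStar s')

def STerm.normalize : STerm A → NormalForm A
  | .tru => .t .tru
  | .fls => .f .fls
  | .atom a => .ts .tru (.lit false a .tru .fls)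
  | .neg p => p.normalize.neg
  | .and p q => p.normalize.and q.normalize
  | .or p q => (p.normalize.neg.and q.normalize.neg).neg

theorem TForm.absorbsT (t : TForm A) : AbsorbsT t.toSTerm := by
  induction t with
  | tru => exact tru_or _
  | node a p q _ ihq => exact (or_assoc _ _ _).trans (or_right ihq)

theorem FForm.absorbsF (f : FForm A) : AbsorbsF f.toSTerm := by
  induction f with
  | fls => exact scl7 _
  | node a u v _ ihv => exact (scl4 _ _ _).trans (and_right ihv)

theorem FForm.or_spec (f g : FForm A) : f.toSTerm ∨◦ g.toSTerm ≐ (f.or g).toSTerm := by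
  induction f with
  | fls => exact fls_or _
  | node a u v ihu ihv =>
      calc ((.atom a ∨◦ u.toSTerm) ∧◦ v.toSTerm) ∨◦ g.toSTerm
          ≐ ((.atom a ∨◦ u.toSTerm) ∨◦ g.toSTerm) ∧◦ (v.toSTerm ∨◦ g.toSTerm) :=
            g.absorbsF.and_or_distrib _ _
        _ ≐ (.atom a ∨◦ (u.or g).toSTerm) ∧◦ (v.or g).toSTerm :=
            and_congr ((or_assoc _ _ _).trans (or_right ihu)) ihv

theorem TForm.and_spec (p t : TForm A) : p.toSTerm ∧◦ t.toSTerm ≐ (p.and t).toSTerm := by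
  induction p with
  | tru => exact scl5 _
  | node a u v ihu ihv =>
      calc ((.atom a ∧◦ u.toSTerm) ∨◦ v.toSTerm) ∧◦ t.toSTerm
          ≐ ((.atom a ∧◦ u.toSTerm) ∧◦ t.toSTerm) ∨◦ (v.toSTerm ∧◦ t.toSTerm) :=
            t.absorbsT.or_and_distrib _ _
        _ ≐ (.atom a ∧◦ (u.and t).toSTerm) ∨◦ (v.and t).toSTerm :=
            or_congr ((scl4 _ _ _).trans (and_right ihu)) ihv

theorem TForm.andF_spec (t : TForm A) (f : FForm A) :
    t.toSTerm ∧◦ f.toSTerm ≐ (t.andF f).toSTerm := by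
  induction t with
  | tru => exact scl5 _
  | node a p q ihp ihq =>
      have hp := p.absorbsT
      have hq := q.absorbsT
      calc ((.atom a ∧◦ p.toSTerm) ∨◦ q.toSTerm) ∧◦ f.toSTerm
          ≐ (∼(.atom a ∧◦ p.toSTerm) ∧◦ (q.toSTerm ∧◦ fls)) ∨◦ f.toSTerm :=
            ((TForm.node a p q).absorbsT.and_eq_or _).trans (or_left (or_and_fls _ _))
        _ ≐ ((∼(.atom a) ∨◦ (p.toSTerm ∧◦ fls)) ∧◦ (q.toSTerm ∧◦ fls)) ∨◦ f.toSTerm :=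
            or_left (and_left ((neg_and _ _).trans (or_right hp.neg_eq)))
        _ ≐ (∼(.atom a) ∨◦ ((p.toSTerm ∧◦ fls) ∨◦ f.toSTerm)) ∧◦
              ((q.toSTerm ∨◦ .tru) ∧◦ f.toSTerm) :=
            (f.absorbsF.and_or_distrib _ _).trans (and_congr (or_assoc _ _ _) (scl9 _ _))
        _ ≐ (∼(.atom a) ∨◦ (p.toSTerm ∧◦ f.toSTerm)) ∧◦ (q.toSTerm ∧◦ f.toSTerm) :=
            and_congr (or_right ((scl9 _ _).trans (and_left hp))) (and_left hq)
        _ ≐ (∼(.atom a) ∨◦ (p.andF f).toSTerm) ∧◦ (q.andF f).toSTerm := and_congr (or_right ihp) ihq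
        _ ≐ (.atom a ∨◦ (q.andF f).toSTerm) ∧◦ (p.andF f).toSTerm :=
            neg_or_and_comm (p.andF f).absorbsF (q.andF f).absorbsF _

/-- Mirroring exchanges T-forms and F-forms and realizes `STerm.dual` on them. -/
def TForm.mirror : TForm A → FForm A
  | .tru => .fls
  | .node a p q => .node a p.mirror q.mirror

def FForm.mirror : FForm A → TForm A
  | .fls => .tru
  | .node a u v => .node a u.mirror v.mirror

theorem TForm.mirror_mirror (t : TForm A) : t.mirror.mirror = t := by
  induction t <;> simp [TForm.mirror, FForm.mirror, *]

theorem FForm.mirror_mirror (f : FForm A) : f.mirror.mirror = f := by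
  induction f <;> simp [TForm.mirror, FForm.mirror, *]

theorem TForm.dual_toSTerm (t : TForm A) : t.toSTerm.dual = t.mirror.toSTerm := by
  induction t <;> simp [TForm.toSTerm, FForm.toSTerm, TForm.mirror, STerm.dual, *]

theorem FForm.dual_toSTerm (f : FForm A) : f.toSTerm.dual = f.mirror.toSTerm := by
  induction f <;> simp [TForm.toSTerm, FForm.toSTerm, FForm.mirror, STerm.dual, *]

theorem FForm.orT_eq_mirror (f : FForm A) (t : TForm A) :
    f.orT t = (f.mirror.andF t.mirror).mirror := by
  induction f <;> simp [FForm.orT, FForm.mirror, TForm.andF, TForm.mirror_mirror, *]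

theorem FForm.orT_spec (f : FForm A) (t : TForm A) :
    f.toSTerm ∨◦ t.toSTerm ≐ (f.orT t).toSTerm := by
  have h := (TForm.andF_spec f.mirror t.mirror).dual
  rwa [STerm.dual, TForm.dual_toSTerm, FForm.dual_toSTerm, TForm.mirror_mirror,
    FForm.mirror_mirror, FForm.dual_toSTerm, ← FForm.orT_eq_mirror] at h

theorem TForm.neg_spec (t : TForm A) : ∼t.toSTerm ≐ t.neg.toSTerm :=
  t.absorbsT.neg_eq.trans (t.andF_spec .fls)

theorem FForm.neg_spec (f : FForm A) : ∼f.toSTerm ≐ f.neg.toSTerm :=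
  f.absorbsF.neg_eq.trans (f.orT_spec .tru)

theorem StarForm.neg_literal (b : Bool) (a : A) : ∼(literal b a) ≐ literal (!b) a := by
  cases b
  · exact refl _
  · exact scl3 _

theorem StarForm.neg_spec (s : StarForm A) : ∼s.toSTerm ≐ s.neg.toSTerm := by
  induction s with
  | lit b a p q =>
      calc ∼((literal b a ∧◦ p.toSTerm) ∨◦ q.toSTerm)
          ≐ (∼(literal b a) ∨◦ (p.toSTerm ∧◦ .fls)) ∧◦ (q.toSTerm ∨◦ .tru) :=
            (neg_or _ _).trans (and_congr ((neg_and _ _).trans (or_right p.absorbsT.neg_eq))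
              q.absorbsF.neg_eq)
        _ ≐ (∼(literal b a) ∧◦ (q.toSTerm ∨◦ .tru)) ∨◦
              (p.toSTerm ∧◦ (.fls ∧◦ (q.toSTerm ∨◦ .tru))) :=
            (and_or_tru_distrib _ _ _).trans (or_right (scl4 _ _ _))
        _ ≐ (literal (!b) a ∧◦ q.neg.toSTerm) ∨◦ p.neg.toSTerm :=
            or_congr (and_congr (neg_literal b a) (q.absorbsF.neg_eq.symm.trans q.neg_spec))
              ((and_right (scl7 _)).trans (p.absorbsT.neg_eq.symm.trans p.neg_spec))
  | and s t ihs iht => exact (neg_and _ _).trans (or_congr ihs iht)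
  | or s t ihs iht => exact (neg_or _ _).trans (and_congr ihs iht)

theorem StarForm.andT_spec (s : StarForm A) (t : TForm A) :
    s.toSTerm ∧◦ t.toSTerm ≐ (s.andT t).toSTerm := by
  induction s with
  | lit b a p q =>
      calc ((literal b a ∧◦ p.toSTerm) ∨◦ q.toSTerm) ∧◦ t.toSTerm
          ≐ (literal b a ∨◦ q.toSTerm) ∧◦ (p.toSTerm ∧◦ t.toSTerm) :=
            (and_left (p.absorbsT.and_or_eq q.absorbsF _)).trans (scl4 _ _ _)
        _ ≐ (literal b a ∧◦ (p.and t).toSTerm) ∨◦ q.toSTerm :=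
            (and_right (p.and_spec t)).trans ((p.and t).absorbsT.and_or_eq q.absorbsF _).symm
  | and s u _ ihu => exact (scl4 _ _ _).trans (and_right ihu)
  | or s u ihs ihu => exact (t.absorbsT.or_and_distrib _ _).trans (or_congr ihs ihu)

theorem StarForm.subst_spec (s : StarForm A) {x : STerm A} {f g : FForm A}
    (hx : x ∧◦ f.toSTerm ≐ g.toSTerm) : (s.toSTerm ∨◦ x) ∧◦ f.toSTerm ≐ (s.subst f g).toSTerm := by
  induction s generalizing x f g with
  | lit b a p q =>
      have hq : (q.toSTerm ∨◦ x) ∧◦ f.toSTerm ≐ (q.or g).toSTerm :=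
        calc (q.toSTerm ∨◦ x) ∧◦ f.toSTerm ≐ (q.toSTerm ∨◦ g.toSTerm) ∧◦ f.toSTerm :=
              (f.absorbsF.or_and_absorb _ _).trans (and_left (or_right hx))
          _ ≐ (q.or g).toSTerm := (and_left (q.or_spec g)).trans ((q.or g).absorbsF.and_eq _)
      have h : (((literal b a ∧◦ p.toSTerm) ∨◦ q.toSTerm) ∨◦ x) ∧◦ f.toSTerm ≐
          (literal b a ∨◦ (q.or g).toSTerm) ∧◦ (p.andF f).toSTerm :=
        calc (((literal b a ∧◦ p.toSTerm) ∨◦ q.toSTerm) ∨◦ x) ∧◦ f.toSTerm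
            ≐ ((literal b a ∧◦ p.toSTerm) ∨◦ (q.or g).toSTerm) ∧◦ f.toSTerm :=
              (and_left (or_assoc _ _ _)).trans
                ((f.absorbsF.or_and_absorb _ _).trans (and_left (or_right hq)))
          _ ≐ (literal b a ∨◦ (q.or g).toSTerm) ∧◦ (p.andF f).toSTerm :=
              (and_left (p.absorbsT.and_or_eq (q.or g).absorbsF _)).trans
                ((scl4 _ _ _).trans (and_right (p.andF_spec f)))
      cases b
      · exact h
      · exact h.trans (neg_or_and_comm (q.or g).absorbsF (p.andF f).absorbsF _)
  | and s t ihs iht =>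
      calc ((s.toSTerm ∧◦ t.toSTerm) ∨◦ x) ∧◦ f.toSTerm
          ≐ ((s.toSTerm ∨◦ g.toSTerm) ∧◦ (t.toSTerm ∨◦ g.toSTerm)) ∧◦ f.toSTerm :=
            (f.absorbsF.or_and_absorb _ _).trans
              (and_left ((or_right hx).trans (g.absorbsF.and_or_distrib _ _)))
        _ ≐ (s.toSTerm ∨◦ g.toSTerm) ∧◦ (t.subst f g).toSTerm :=
            (scl4 _ _ _).trans (and_right (iht (g.absorbsF.and_eq _)))
        _ ≐ (s.subst (t.subst f g) g).toSTerm := ihs (g.absorbsF.and_eq _)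
  | or s t ihs iht => exact (and_left (or_assoc _ _ _)).trans (ihs (iht hx))

theorem StarForm.andF_spec (s : StarForm A) (f : FForm A) :
    s.toSTerm ∧◦ f.toSTerm ≐ (s.andF f).toSTerm :=
  (and_left (or_fls _).symm).trans (s.subst_spec (scl7 _))

theorem StarForm.andStar_spec (x t : StarForm A) :
    x.toSTerm ∧◦ t.toSTerm ≐ (x.andStar t).toSTerm := by
  induction t generalizing x with
  | and s u ihs ihu => exact (scl4 _ _ _).symm.trans ((and_left (ihs x)).trans (ihu _))
  | _ => exact refl _

theorem NormalForm.neg_spec (n : NormalForm A) : ∼n.toSTerm ≐ n.neg.toSTerm := by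
  cases n with
  | t p => exact p.neg_spec
  | f q => exact q.neg_spec
  | ts p s =>
      calc ∼(p.toSTerm ∧◦ s.toSTerm) ≐ (p.toSTerm ∧◦ .fls) ∨◦ ∼s.toSTerm :=
            (neg_and _ _).trans (or_left p.absorbsT.neg_eq)
        _ ≐ p.toSTerm ∧◦ s.neg.toSTerm := (scl9 _ _).trans (and_congr p.absorbsT s.neg_spec)

theorem NormalForm.and_spec (m n : NormalForm A) :
    m.toSTerm ∧◦ n.toSTerm ≐ (m.and n).toSTerm := by
  cases m with
  | f p => exact p.absorbsF.and_eq _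
  | t p =>
      cases n with
      | t q => exact p.and_spec q
      | f q => exact p.andF_spec q
      | ts q s => exact (scl4 _ _ _).symm.trans (and_left (p.and_spec q))
  | ts p s =>
      cases n with
      | t q => exact (scl4 _ _ _).trans (and_right (s.andT_spec q))
      | f q => exact (scl4 _ _ _).trans ((and_right (s.andF_spec q)).trans (p.andF_spec _))
      | ts q s' =>
          exact (scl4 _ _ _).trans (and_right ((scl4 _ _ _).symm.trans
            ((and_left (s.andT_spec q)).trans (StarForm.andStar_spec _ _))))

theorem STerm.normalize_spec (P : STerm A) : P ≐ P.normalize.toSTerm := by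
  induction P with
  | atom a => exact ((scl5 _).trans ((or_fls _).trans (scl6 _))).symm
  | tru | fls => exact refl _
  | neg p ih => exact (neg_congr ih).trans (NormalForm.neg_spec _)
  | and p q ihp ihq => exact (and_congr ihp ihq).trans (NormalForm.and_spec _ _)
  | or p q ihp ihq =>
      calc p ∨◦ q ≐ ∼(p.normalize.neg.toSTerm ∧◦ q.normalize.neg.toSTerm) :=
            (scl2 _ _).trans (neg_congr (and_congr ((neg_congr ihp).trans (NormalForm.neg_spec _))
              ((neg_congr ihq).trans (NormalForm.neg_spec _))))
        _ ≐ (p.normalize.neg.and q.normalize.neg).neg.toSTerm :=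
            (neg_congr (NormalForm.and_spec _ _)).trans (NormalForm.neg_spec _)

namespace StarForm

theorem isDisj_andT {s : StarForm A} (h : s.IsDisj) (t : TForm A) : (s.andT t).IsDisj := by
  cases s <;> simp_all [IsDisj, andT]

theorem isConj_andT {s : StarForm A} (h : s.IsConj) (t : TForm A) : (s.andT t).IsConj := by
  cases s <;> simp_all [IsConj, andT]

theorem isDisj_neg {s : StarForm A} (h : s.IsConj) : s.neg.IsDisj := by
  cases s <;> simp_all [IsConj, IsDisj, neg]

theorem isConj_neg {s : StarForm A} (h : s.IsDisj) : s.neg.IsConj := by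
  cases s <;> simp_all [IsConj, IsDisj, neg]

theorem WF.andT {s : StarForm A} (h : s.WF) (t : TForm A) : (s.andT t).WF := by
  induction s with
  | lit => trivial
  | and s u _ ihu => exact ⟨h.1, ihu h.2.1, isDisj_andT h.2.2 t⟩
  | or s u ihs ihu => exact ⟨ihs h.1, ihu h.2.1, isConj_andT h.2.2 t⟩

theorem WF.neg {s : StarForm A} (h : s.WF) : s.neg.WF := by
  induction s with
  | lit => trivial
  | and s u ihs ihu => exact ⟨ihs h.1, ihu h.2.1, isConj_neg h.2.2⟩
  | or s u ihs ihu => exact ⟨ihs h.1, ihu h.2.1, isDisj_neg h.2.2⟩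

theorem WF.andStar {t : StarForm A} (ht : t.WF) {x : StarForm A} (hx : x.WF) :
    (x.andStar t).WF := by
  induction t generalizing x with
  | lit => exact ⟨hx, trivial, trivial⟩
  | and s u ihs ihu => exact ihu ht.2.1 (ihs ht.1 hx)
  | or => exact ⟨hx, ht, trivial⟩

end StarForm

theorem NormalForm.WF.neg {n : NormalForm A} (h : n.WF) : n.neg.WF := by
  cases n with
  | ts p s => exact StarForm.WF.neg h
  | _ => trivial

theorem NormalForm.WF.and {m n : NormalForm A} (hm : m.WF) (hn : n.WF) : (m.and n).WF := by
  cases m <;> cases n <;> first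
    | trivial | exact hn | exact StarForm.WF.andT hm _ | exact StarForm.WF.andStar hn (hm.andT _)

theorem STerm.normalize_wf (P : STerm A) : P.normalize.WF := by
  induction P with
  | atom | tru | fls => trivial
  | neg p ih => exact ih.neg
  | and p q ihp ihq => exact ihp.and ihq
  | or p q ihp ihq => exact (ihp.neg.and ihq.neg).neg

namespace ETree

theorem subst_subst (X Y Z U V : ETree A) :
    (X.subst Y Z).subst U V = X.subst (Y.subst U V) (Z.subst U V) := by
  induction X <;> simp [subst, *]

theorem subst_tru_fls (X : ETree A) : X.subst .tru .fls = X := by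
  induction X <;> simp [subst, *]

@[simp] theorem hasTru_subst {X Y Z : ETree A} :
    (X.subst Y Z).hasTru ↔ X.hasTru ∧ Y.hasTru ∨ X.hasFls ∧ Z.hasTru := by
  induction X with
  | tru | fls => simp [subst, hasTru, hasFls]
  | node l a r ihl ihr => simp only [subst, hasTru, hasFls, ihl, ihr]; tauto

@[simp] theorem hasFls_subst {X Y Z : ETree A} :
    (X.subst Y Z).hasFls ↔ X.hasTru ∧ Y.hasFls ∨ X.hasFls ∧ Z.hasFls := by
  induction X with
  | tru | fls => simp [subst, hasTru, hasFls]
  | node l a r ihl ihr => simp only [subst, hasTru, hasFls, ihl, ihr]; tauto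

@[simp] theorem hasTru_tru : (tru : ETree A).hasTru := trivial
@[simp] theorem not_hasTru_fls : ¬(fls : ETree A).hasTru := id
@[simp] theorem not_hasFls_tru : ¬(tru : ETree A).hasFls := id
@[simp] theorem hasFls_fls : (fls : ETree A).hasFls := trivial

theorem hasTru_or_hasFls (X : ETree A) : X.hasTru ∨ X.hasFls := by
  induction X with
  | tru => exact Or.inl trivial
  | fls => exact Or.inr trivial
  | node l a r ihl => exact ihl.imp Or.inl Or.inl

theorem subst_congr_left {X : ETree A} (h : ¬X.hasTru) (Y Y' Z : ETree A) :
    X.subst Y Z = X.subst Y' Z := by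
  induction X with
  | tru => exact absurd trivial h
  | fls => rfl
  | node l a r ihl ihr =>
      simp only [hasTru, not_or] at h
      simp [subst, ihl h.1, ihr h.2]

theorem subst_congr_right {X : ETree A} (h : ¬X.hasFls) (Y Z Z' : ETree A) :
    X.subst Y Z = X.subst Y Z' := by
  induction X with
  | tru => rfl
  | fls => exact absurd trivial h
  | node l a r ihl ihr =>
      simp only [hasFls, not_or] at h
      simp [subst, ihl h.1, ihr h.2]

theorem graftT_of_not_hasTru {X : ETree A} (h : ¬X.hasTru) (Z : ETree A) : X[T↦Z] = X :=
  (subst_congr_left h _ _ _).trans X.subst_tru_fls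

theorem graftF_of_not_hasFls {X : ETree A} (h : ¬X.hasFls) (Z : ETree A) : X[F↦Z] = X :=
  (subst_congr_right h _ _ _).trans X.subst_tru_fls

theorem graftT_assoc (X Y Z : ETree A) : X[T↦Y][T↦Z] = X[T↦Y[T↦Z]] := subst_subst _ _ _ _ _

theorem graftF_assoc (X Y Z : ETree A) : X[F↦Y][F↦Z] = X[F↦Y[F↦Z]] := subst_subst _ _ _ _ _

/-- `X[T↦F, F↦T]`, the tree of the negation. -/
def swap (X : ETree A) : ETree A := X.subst .fls .tru

@[simp] theorem swap_swap (X : ETree A) : X.swap.swap = X :=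
  (subst_subst _ _ _ _ _).trans X.subst_tru_fls

theorem swap_injective : Function.Injective (swap : ETree A → ETree A) :=
  Function.LeftInverse.injective swap_swap

@[simp] theorem hasTru_swap {X : ETree A} : X.swap.hasTru ↔ X.hasFls := by simp [swap]

@[simp] theorem hasFls_swap {X : ETree A} : X.swap.hasFls ↔ X.hasTru := by simp [swap]

theorem swap_graftT (X Z : ETree A) : X[T↦Z].swap = X.swap[F↦Z.swap] :=
  (subst_subst _ _ _ _ _).trans (subst_subst X .fls .tru .tru Z.swap).symm

theorem swap_graftF (X Z : ETree A) : X[F↦Z].swap = X.swap[T↦Z.swap] :=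
  (subst_subst _ _ _ _ _).trans (subst_subst X .fls .tru Z.swap .fls).symm

@[simp] theorem depth_swap (X : ETree A) : X.swap.depth = X.depth := by
  induction X <;> simp [swap, subst, depth, *] at *

theorem swap_graftF_of_not_hasFls {U : ETree A} (h : ¬U.hasFls) (V : ETree A) :
    U.swap[F↦V] = U[T↦V] :=
  (subst_subst _ _ _ _ _).trans (subst_congr_right h _ _ _)

end ETree

namespace ETree

theorem depth_le_subst_left {X : ETree A} (h : X.hasTru) (Y Z : ETree A) :
    Y.depth ≤ (X.subst Y Z).depth := by
  induction X with
  | tru => exact le_rfl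
  | fls => exact absurd h id
  | node l a r ihl ihr =>
      simp only [subst, depth]
      rcases h with h | h
      · have := ihl h; omega
      · have := ihr h; omega

theorem depth_le_subst_right {X : ETree A} (h : X.hasFls) (Y Z : ETree A) :
    Z.depth ≤ (X.subst Y Z).depth := by
  induction X with
  | tru => exact absurd h id
  | fls => exact le_rfl
  | node l a r ihl ihr =>
      simp only [subst, depth]
      rcases h with h | h
      · have := ihl h; omega
      · have := ihr h; omega

theorem depth_lt_subst_left {l r : ETree A} {a : A} (h : (node l a r).hasTru) (Y Z : ETree A) :
    Y.depth < ((node l a r).subst Y Z).depth := by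
  simp only [subst, depth]
  rcases h with h | h
  · have := depth_le_subst_left h Y Z; omega
  · have := depth_le_subst_left h Y Z; omega

theorem depth_lt_subst_right {l r : ETree A} {a : A} (h : (node l a r).hasFls) (Y Z : ETree A) :
    Z.depth < ((node l a r).subst Y Z).depth := by
  simp only [subst, depth]
  rcases h with h | h
  · have := depth_le_subst_right h Y Z; omega
  · have := depth_le_subst_right h Y Z; omega

theorem hasTru_of_hasTru_graftT {X Z : ETree A} (h : X[T↦Z].hasTru) : X.hasTru := by
  simp_all

theorem hasFls_of_hasFls_graftF {X Z : ETree A} (h : X[F↦Z].hasFls) : X.hasFls := by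
  simp_all

theorem hasTru_graftF_of_hasTru {X : ETree A} (h : X.hasTru) (Z : ETree A) : X[F↦Z].hasTru := by
  simp [h]

theorem eq_tru_of_graftT_eq_self {X Z : ETree A} (h : X[T↦Z] = Z) (hZ : Z.hasTru) : X = .tru := by
  cases X with
  | tru => rfl
  | fls => simp only [subst] at h; subst h; exact absurd hZ id
  | node l a r =>
      rw [← h] at hZ
      have := depth_lt_subst_left (hasTru_of_hasTru_graftT hZ) Z .fls
      rw [h] at this
      exact absurd this (lt_irrefl _)

theorem graftT_left_injective {Z : ETree A} (hZ : Z.hasTru) {X X' : ETree A}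
    (h : X[T↦Z] = X'[T↦Z]) : X = X' := by
  induction X generalizing X' with
  | tru => exact (eq_tru_of_graftT_eq_self h.symm hZ).symm
  | fls =>
      cases X' with
      | tru => simp only [subst] at h; subst h; exact absurd hZ id
      | fls => rfl
      | node => simp [subst] at h
  | node l a r ihl ihr =>
      cases X' with
      | tru => exact eq_tru_of_graftT_eq_self h hZ
      | fls => simp [subst] at h
      | node l' a' r' =>
          simp only [subst, node.injEq] at h
          rw [ihl h.1, h.2.1, ihr h.2.2]

theorem graftF_left_injective {Z : ETree A} (hZ : Z.hasFls) {X X' : ETree A}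
    (h : X[F↦Z] = X'[F↦Z]) : X = X' :=
  swap_injective <| graftT_left_injective (hasTru_swap.2 hZ) <| by
    rw [← swap_graftF, ← swap_graftF, h]

/-- Levi's lemma for grafting; the proof follows a `T`-leaf of `Y`. -/
theorem graftT_comparable {Y Y' Z Z' : ETree A} (h : Y[T↦Z] = Y'[T↦Z']) (hY : Y.hasTru) :
    (∃ W, Z' = W[T↦Z]) ∨ ∃ W, Z = W[T↦Z'] := by
  induction Y generalizing Y' with
  | tru => exact Or.inr ⟨Y', h⟩
  | fls => exact absurd hY id
  | node l a r ihl ihr =>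
      cases Y' with
      | tru => exact Or.inl ⟨_, h.symm⟩
      | fls => simp [subst] at h
      | node l' a' r' =>
          simp only [subst, node.injEq] at h
          exact hY.elim (ihl h.1) (ihr h.2.2)

theorem graftF_comparable {Y Y' Z Z' : ETree A} (h : Y[F↦Z] = Y'[F↦Z']) (hY : Y.hasFls) :
    (∃ W, Z' = W[F↦Z]) ∨ ∃ W, Z = W[F↦Z'] := by
  have hs : Y.swap[T↦Z.swap] = Y'.swap[T↦Z'.swap] := by rw [← swap_graftF, ← swap_graftF, h]
  rcases graftT_comparable hs (hasTru_swap.2 hY) with ⟨W, hW⟩ | ⟨W, hW⟩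
  · exact Or.inl ⟨W.swap, swap_injective (hW.trans (by rw [swap_graftF, swap_swap]))⟩
  · exact Or.inr ⟨W.swap, swap_injective (hW.trans (by rw [swap_graftF, swap_swap]))⟩

theorem depth_lt_of_graftT_eq_graftF {Y Y' Z Z' : ETree A} (h : Y[T↦Z] = Y'[F↦Z'])
    (hY : Y.hasTru) (hY' : Y'.hasTru) (hZ : Z.hasFls) : Z'.depth < Z.depth := by
  induction Y generalizing Y' with
  | tru =>
      cases Y' with
      | tru => simp only [subst] at h; subst h; exact absurd hZ id
      | fls => exact absurd hY' id
      | node l a r =>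
          simp only [subst] at h
          rw [h] at hZ ⊢
          exact depth_lt_subst_right (hasFls_of_hasFls_graftF hZ) .tru Z'
  | fls => exact absurd hY id
  | node l a r ihl ihr =>
      cases Y' with
      | tru => simp [subst] at h
      | fls => exact absurd hY' id
      | node l' a' r' =>
          simp only [subst, node.injEq] at h
          rcases hY' with hl | hr
          · exact ihl h.1 (hasTru_of_hasTru_graftT (h.1 ▸ hasTru_graftF_of_hasTru hl Z')) hl
          · exact ihr h.2.2 (hasTru_of_hasTru_graftT (h.2.2 ▸ hasTru_graftF_of_hasTru hr Z')) hr

/-- Each of `Z`, `Z'` would have to be deeper than the other. -/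
theorem graftT_ne_graftF {Y Y' Z Z' : ETree A} (hY : Y.hasTru) (hY₂ : Y.hasFls)
    (hY' : Y'.hasTru) (hY'₂ : Y'.hasFls) (hZ : Z.hasFls) (hZ' : Z'.hasTru) :
    Y[T↦Z] ≠ Y'[F↦Z'] := by
  intro h
  have h₁ := depth_lt_of_graftT_eq_graftF h hY hY' hZ
  have h₂ := depth_lt_of_graftT_eq_graftF (Y := Y'.swap) (Y' := Y.swap) (Z := Z'.swap)
    (by rw [← swap_graftF, ← swap_graftT, h]) (by simpa) (by simpa) (by simpa)
  simp only [depth_swap] at h₂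
  omega

end ETree

open ETree

theorem ETree.eq_tru_of_node_eq_graftT {l r Y Z : ETree A} {a : A} (h : node l a r = Y[T↦Z])
    (hY : Y.hasTru) (hZ : Z.hasTru) (hZ' : Z.hasFls)
    (hl : ¬(l.hasTru ∧ l.hasFls)) (hr : ¬(r.hasTru ∧ r.hasFls)) : Y = .tru := by
  cases Y with
  | tru => rfl
  | fls => exact absurd hY id
  | node Yl c Yr =>
      simp only [subst, node.injEq] at h
      rcases hY with hY | hY
      · exact absurd (by simp [h.1, hY, hZ, hZ']) hl
      · exact absurd (by simp [h.2.2, hY, hZ, hZ']) hr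

theorem ETree.eq_fls_of_node_eq_graftF {l r Y Z : ETree A} {a : A} (h : node l a r = Y[F↦Z])
    (hY : Y.hasFls) (hZ : Z.hasTru) (hZ' : Z.hasFls)
    (hl : ¬(l.hasTru ∧ l.hasFls)) (hr : ¬(r.hasTru ∧ r.hasFls)) : Y = .fls := by
  have h' : node l.swap a r.swap = Y.swap[T↦Z.swap] := by
    rw [← swap_graftF, ← h]; rfl
  have := eq_tru_of_node_eq_graftT h' (by simpa) (by simpa) (by simpa)
    (by simpa [and_comm] using hl) (by simpa [and_comm] using hr)
  exact (swap_swap Y).symm.trans (congrArg swap this)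

def TForm.tree : TForm A → ETree A
  | .tru => .tru
  | .node a p q => .node p.tree a q.tree

def FForm.tree : FForm A → ETree A
  | .fls => .fls
  | .node a u v => .node v.tree a u.tree

def StarForm.tree : StarForm A → ETree A
  | .lit false a p q => .node p.tree a q.tree
  | .lit true a p q => .node q.tree a p.tree
  | .and s t => s.tree[T↦t.tree]
  | .or s t => s.tree[F↦t.tree]

def NormalForm.tree : NormalForm A → ETree A
  | .t p => p.tree
  | .f q => q.tree
  | .ts p s => p.tree[T↦s.tree]

@[simp] theorem TForm.hasTru_tree (t : TForm A) : t.tree.hasTru := by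
  induction t with
  | tru => trivial
  | node a p q ihp => exact Or.inl ihp

@[simp] theorem TForm.not_hasFls_tree (t : TForm A) : ¬t.tree.hasFls := by
  induction t with
  | tru => exact id
  | node a p q ihp ihq => exact fun h => h.elim ihp ihq

@[simp] theorem FForm.hasFls_tree (f : FForm A) : f.tree.hasFls := by
  induction f with
  | fls => trivial
  | node a u v _ ihv => exact Or.inl ihv

@[simp] theorem FForm.not_hasTru_tree (f : FForm A) : ¬f.tree.hasTru := by
  induction f with
  | fls => exact id
  | node a u v ihu ihv => exact fun h => h.elim ihv ihu

theorem TForm.tree_injective : Function.Injective (tree : TForm A → ETree A) := by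
  intro p q h
  induction p generalizing q with
  | tru => cases q <;> simp_all [tree]
  | node a p₁ p₂ ih₁ ih₂ =>
      cases q with
      | tru => simp [tree] at h
      | node a' q₁ q₂ =>
          simp only [tree, ETree.node.injEq] at h
          rw [ih₁ h.1, h.2.1, ih₂ h.2.2]

theorem FForm.tree_injective : Function.Injective (tree : FForm A → ETree A) := by
  intro p q h
  induction p generalizing q with
  | fls => cases q <;> simp_all [tree]
  | node a p₁ p₂ ih₁ ih₂ =>
      cases q with
      | fls => simp [tree] at h
      | node a' q₁ q₂ =>
          simp only [tree, ETree.node.injEq] at h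
          rw [ih₂ h.1, h.2.1, ih₁ h.2.2]

@[simp] theorem StarForm.hasTru_tree (s : StarForm A) : s.tree.hasTru := by
  induction s with
  | lit b => cases b <;> simp [tree, hasTru]
  | and s t ihs iht => simp [tree, ihs, iht]
  | or s t ihs => simp [tree, ihs]

@[simp] theorem StarForm.hasFls_tree (s : StarForm A) : s.tree.hasFls := by
  induction s with
  | lit b => cases b <;> simp [tree, hasFls]
  | and s t ihs => simp [tree, ihs]
  | or s t ihs iht => simp [tree, ihs, iht]

theorem TForm.se_toSTerm (t : TForm A) : se t.toSTerm = t.tree := by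
  induction t with
  | tru => rfl
  | node a p q ihp ihq =>
      change ((ETree.node .tru a .fls)[T↦se p.toSTerm])[F↦se q.toSTerm] = _
      rw [ihp, ihq]
      simp [subst, tree, graftF_of_not_hasFls]

theorem FForm.se_toSTerm (f : FForm A) : se f.toSTerm = f.tree := by
  induction f with
  | fls => rfl
  | node a u v ihu ihv =>
      change ((ETree.node .tru a .fls)[F↦se u.toSTerm])[T↦se v.toSTerm] = _
      rw [ihu, ihv]
      simp [subst, tree, graftT_of_not_hasTru]

theorem StarForm.se_toSTerm (s : StarForm A) : se s.toSTerm = s.tree := by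
  induction s with
  | lit b a p q =>
      cases b <;>
      · change ((se (literal _ a))[T↦se p.toSTerm])[F↦se q.toSTerm] = _
        simp [literal, se, ETree.subst, tree, TForm.se_toSTerm, FForm.se_toSTerm,
          graftF_of_not_hasFls]
  | and s t ihs iht => exact congrArg₂ (fun X Z => X[T↦Z]) ihs iht
  | or s t ihs iht => exact congrArg₂ (fun X Z => X[F↦Z]) ihs iht

theorem NormalForm.se_toSTerm (n : NormalForm A) : se n.toSTerm = n.tree := by
  cases n with
  | t p => exact p.se_toSTerm
  | f q => exact q.se_toSTerm
  | ts p s => exact congrArg₂ (fun X Z => X[T↦Z]) p.se_toSTerm s.se_toSTerm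

namespace StarForm

theorem tree_lit_not_both (b : Bool) (a : A) (p : TForm A) (q : FForm A) :
    ∃ l r, (lit b a p q).tree = node l a r ∧ ¬(l.hasTru ∧ l.hasFls) ∧ ¬(r.hasTru ∧ r.hasFls) := by
  cases b
  · exact ⟨_, _, rfl, by simp, by simp⟩
  · exact ⟨_, _, rfl, by simp, by simp⟩

theorem eq_tru_of_tree_eq_graftT (s : StarForm A) {U V : ETree A} (h : s.tree = U[T↦V])
    (hU : ¬U.hasFls) : U = .tru := by
  induction s generalizing U V with
  | lit b a p q =>
      have hT := h ▸ (lit b a p q).hasTru_tree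
      have hF := h ▸ (lit b a p q).hasFls_tree
      obtain ⟨l, r, hlr, hl, hr⟩ := tree_lit_not_both b a p q
      exact eq_tru_of_node_eq_graftT (hlr ▸ h) ((U.hasTru_or_hasFls).resolve_right hU)
        (by simp_all) (by simp_all) hl hr
  | and s t ihs _ =>
      change s.tree[T↦t.tree] = _ at h
      rcases graftT_comparable h s.hasTru_tree with ⟨W, hW⟩ | ⟨W, hW⟩
      · exact ihs (graftT_left_injective t.hasTru_tree (by rw [h, hW, graftT_assoc])) hU
      · have hV : V.hasTru := (by simpa [hW] using t.hasTru_tree : W.hasTru ∧ V.hasTru).2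
        have hUW : U = s.tree[T↦W] := graftT_left_injective hV (by rw [graftT_assoc, ← hW, h])
        simp [hUW] at hU
  | or s t ihs _ =>
      change s.tree[F↦t.tree] = _ at h
      -- `U` has only `T`-leaves, so `U[T↦V] = U.swap[F↦V]` and Levi's lemma for `F` applies
      rw [← swap_graftF_of_not_hasFls hU] at h
      rcases graftF_comparable h s.hasFls_tree with ⟨W, hW⟩ | ⟨W, hW⟩
      · refine ihs (V := W) ?_ hU
        rw [← swap_graftF_of_not_hasFls hU]
        exact graftF_left_injective t.hasFls_tree (by rw [h, hW, graftF_assoc])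
      · have hV : V.hasFls := (by simpa [hW] using t.hasFls_tree : W.hasFls ∧ V.hasFls).2
        have hUW : U.swap = s.tree[F↦W] :=
          graftF_left_injective hV (by rw [graftF_assoc, ← hW, h])
        have : ¬U.swap.hasTru := by simpa using hU
        simp [hUW] at this

theorem eq_fls_of_tree_eq_graftF (s : StarForm A) {U V : ETree A} (h : s.tree = U[F↦V])
    (hU : ¬U.hasTru) : U = .fls := by
  have hU' : ¬U.swap.hasFls := by simpa using hU
  have := s.eq_tru_of_tree_eq_graftT (by rw [h, ← swap_graftF_of_not_hasFls hU', swap_swap]) hU'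
  exact (swap_swap U).symm.trans (congrArg swap this)

theorem IsDisj.eq_tru_of_tree_eq_graftT {s : StarForm A} (hs : s.IsDisj) {Y Z : ETree A}
    (h : s.tree = Y[T↦Z]) (hY : Y.hasTru) (hZ : Z.hasTru) (hZ' : Z.hasFls) : Y = .tru := by
  cases s with
  | lit b a p q =>
      obtain ⟨l, r, hlr, hl, hr⟩ := tree_lit_not_both b a p q
      exact eq_tru_of_node_eq_graftT (hlr ▸ h) hY hZ hZ' hl hr
  | and => exact hs.elim
  | or s t =>
      by_cases hYF : Y.hasFls
      · exact absurd h.symm (graftT_ne_graftF hY hYF s.hasTru_tree s.hasFls_tree hZ' t.hasTru_tree)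
      · exact (or s t).eq_tru_of_tree_eq_graftT h hYF

theorem IsConj.eq_fls_of_tree_eq_graftF {s : StarForm A} (hs : s.IsConj) {Y Z : ETree A}
    (h : s.tree = Y[F↦Z]) (hY : Y.hasFls) (hZ : Z.hasTru) (hZ' : Z.hasFls) : Y = .fls := by
  cases s with
  | lit b a p q =>
      obtain ⟨l, r, hlr, hl, hr⟩ := tree_lit_not_both b a p q
      exact eq_fls_of_node_eq_graftF (hlr ▸ h) hY hZ hZ' hl hr
  | or => exact hs.elim
  | and s t =>
      by_cases hYT : Y.hasTru
      · exact absurd h (graftT_ne_graftF s.hasTru_tree s.hasFls_tree hYT hY t.hasFls_tree hZ)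
      · exact (and s t).eq_fls_of_tree_eq_graftF h hYT

theorem tree_eq_of_graftT_eq {s₁ t₁ s₂ t₂ : StarForm A} (ht₁ : t₁.IsDisj) (ht₂ : t₂.IsDisj)
    (h : s₁.tree[T↦t₁.tree] = s₂.tree[T↦t₂.tree]) : s₁.tree = s₂.tree ∧ t₁.tree = t₂.tree := by
  have ht : t₁.tree = t₂.tree := by
    rcases graftT_comparable h s₁.hasTru_tree with ⟨W, hW⟩ | ⟨W, hW⟩
    · obtain rfl := ht₂.eq_tru_of_tree_eq_graftT hW
        (hasTru_of_hasTru_graftT (hW ▸ t₂.hasTru_tree)) t₁.hasTru_tree t₁.hasFls_tree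
      exact hW.symm
    · obtain rfl := ht₁.eq_tru_of_tree_eq_graftT hW
        (hasTru_of_hasTru_graftT (hW ▸ t₁.hasTru_tree)) t₂.hasTru_tree t₂.hasFls_tree
      exact hW
  exact ⟨graftT_left_injective t₁.hasTru_tree (ht ▸ h), ht⟩

theorem tree_eq_of_graftF_eq {s₁ t₁ s₂ t₂ : StarForm A} (ht₁ : t₁.IsConj) (ht₂ : t₂.IsConj)
    (h : s₁.tree[F↦t₁.tree] = s₂.tree[F↦t₂.tree]) : s₁.tree = s₂.tree ∧ t₁.tree = t₂.tree := by
  have ht : t₁.tree = t₂.tree := by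
    rcases graftF_comparable h s₁.hasFls_tree with ⟨W, hW⟩ | ⟨W, hW⟩
    · obtain rfl := ht₂.eq_fls_of_tree_eq_graftF hW
        (hasFls_of_hasFls_graftF (hW ▸ t₂.hasFls_tree)) t₁.hasTru_tree t₁.hasFls_tree
      exact hW.symm
    · obtain rfl := ht₁.eq_fls_of_tree_eq_graftF hW
        (hasFls_of_hasFls_graftF (hW ▸ t₁.hasFls_tree)) t₂.hasTru_tree t₂.hasFls_tree
      exact hW
  exact ⟨graftF_left_injective t₁.hasFls_tree (ht ▸ h), ht⟩

theorem tree_lit_ne_graftT (b : Bool) (a : A) (p : TForm A) (q : FForm A) (s t : StarForm A) :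
    (lit b a p q).tree ≠ s.tree[T↦t.tree] := fun h => by
  have := IsDisj.eq_tru_of_tree_eq_graftT (s := lit b a p q) trivial h s.hasTru_tree
    t.hasTru_tree t.hasFls_tree
  simpa [this] using s.hasFls_tree

theorem tree_lit_ne_graftF (b : Bool) (a : A) (p : TForm A) (q : FForm A) (s t : StarForm A) :
    (lit b a p q).tree ≠ s.tree[F↦t.tree] := fun h => by
  have := IsConj.eq_fls_of_tree_eq_graftF (s := lit b a p q) trivial h s.hasFls_tree
    t.hasTru_tree t.hasFls_tree
  simpa [this] using s.hasTru_tree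

theorem tree_and_ne_tree_or (s₁ t₁ s₂ t₂ : StarForm A) : (and s₁ t₁).tree ≠ (or s₂ t₂).tree :=
  graftT_ne_graftF s₁.hasTru_tree s₁.hasFls_tree s₂.hasTru_tree s₂.hasFls_tree t₁.hasFls_tree
    t₂.hasTru_tree

theorem lit_eq_of_tree_eq {b b' : Bool} {a a' : A} {p p' : TForm A} {q q' : FForm A}
    (h : (lit b a p q).tree = (lit b' a' p' q').tree) : lit b a p q = lit b' a' p' q' := by
  cases b <;> cases b' <;> simp only [tree, ETree.node.injEq] at h
  · rw [TForm.tree_injective h.1, h.2.1, FForm.tree_injective h.2.2]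
  · exact (q'.not_hasTru_tree (h.1 ▸ p.hasTru_tree)).elim
  · exact (q.not_hasTru_tree (h.1 ▸ p'.hasTru_tree)).elim
  · rw [TForm.tree_injective h.2.2, h.2.1, FForm.tree_injective h.1]

theorem tree_injective {s s' : StarForm A} (hs : s.WF) (hs' : s'.WF) (h : s.tree = s'.tree) :
    s = s' := by
  induction s generalizing s' with
  | lit =>
      cases s' with
      | lit => exact lit_eq_of_tree_eq h
      | and => exact absurd h (tree_lit_ne_graftT _ _ _ _ _ _)
      | or => exact absurd h (tree_lit_ne_graftF _ _ _ _ _ _)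
  | and s₁ t₁ ihs iht =>
      cases s' with
      | lit => exact absurd h.symm (tree_lit_ne_graftT _ _ _ _ _ _)
      | and s₂ t₂ =>
          obtain ⟨h₁, h₂⟩ := tree_eq_of_graftT_eq hs.2.2 hs'.2.2 h
          rw [ihs hs.1 hs'.1 h₁, iht hs.2.1 hs'.2.1 h₂]
      | or => exact absurd h (tree_and_ne_tree_or _ _ _ _)
  | or s₁ t₁ ihs iht =>
      cases s' with
      | lit => exact absurd h.symm (tree_lit_ne_graftF _ _ _ _ _ _)
      | and => exact absurd h.symm (tree_and_ne_tree_or _ _ _ _)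
      | or s₂ t₂ =>
          obtain ⟨h₁, h₂⟩ := tree_eq_of_graftF_eq hs.2.2 hs'.2.2 h
          rw [ihs hs.1 hs'.1 h₁, iht hs.2.1 hs'.2.1 h₂]

end StarForm

theorem TForm.eq_of_tree_graftT_eq {p p' : TForm A} {s s' : StarForm A}
    (h : p.tree[T↦s.tree] = p'.tree[T↦s'.tree]) : p = p' ∧ s.tree = s'.tree := by
  wlog hW : ∃ W, s'.tree = W[T↦s.tree] generalizing p p' s s'
  · exact (this h.symm ((graftT_comparable h p.hasTru_tree).resolve_left hW)).imp Eq.symm Eq.symm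
  obtain ⟨W, hW⟩ := hW
  have hp : p.tree = p'.tree[T↦W] :=
    graftT_left_injective s.hasTru_tree (by rw [h, hW, graftT_assoc])
  have hWF : ¬W.hasFls := fun hWF => p.not_hasFls_tree (by rw [hp]; simp [hWF])
  obtain rfl := s'.eq_tru_of_tree_eq_graftT hW hWF
  exact ⟨tree_injective (hp.trans (subst_tru_fls _)), hW.symm⟩

theorem NormalForm.tree_injective {m n : NormalForm A} (hm : m.WF) (hn : n.WF)
    (h : m.tree = n.tree) : m = n := by
  have hT := congrArg hasTru h
  have hF := congrArg hasFls h
  rcases m with p | q | ⟨p, s⟩ <;> rcases n with p' | q' | ⟨p', s'⟩ <;> simp [tree] at hT hF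
  · rw [TForm.tree_injective h]
  · rw [FForm.tree_injective h]
  · obtain ⟨rfl, hs⟩ := TForm.eq_of_tree_graftT_eq h
    rw [StarForm.tree_injective hm hn hs]

theorem EqFSCL.se_eq {p q : STerm A} (h : p ≐ q) : se p = se q := by
  induction h with
  | refl => rfl
  | symm _ ih => exact ih.symm
  | trans _ _ ih₁ ih₂ => exact ih₁.trans ih₂
  | neg_congr _ ih => exact congrArg swap ih
  | and_congr _ _ ih₁ ih₂ => exact congrArg₂ (fun X Z => X[T↦Z]) ih₁ ih₂
  | or_congr _ _ ih₁ ih₂ => exact congrArg₂ (fun X Z => X[F↦Z]) ih₁ ih₂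
  | scl1 | scl5 | scl7 => rfl
  | scl2 x y =>
      show (se x)[F↦se y] = ((se x).swap[T↦(se y).swap]).swap
      rw [swap_graftT, swap_swap, swap_swap]
  | scl3 x => exact swap_swap _
  | scl4 x y z => exact graftT_assoc _ _ _
  | scl6 x => exact subst_tru_fls _
  | scl8 | scl9 | scl10 => simp only [se, subst_subst]; rfl

end Completeness

/-- completeness of EqFSCL for FSCL_se. -/
theorem eqfscl_complete (A : Type) [Countable A] (P Q : STerm A)
    (h : se P = se Q) : EqFSCL P Q := by
  have hnf : P.normalize = Q.normalize := by
    refine NormalForm.tree_injective P.normalize_wf Q.normalize_wf ?_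
    rw [← NormalForm.se_toSTerm, ← NormalForm.se_toSTerm, ← P.normalize_spec.se_eq,
      ← Q.normalize_spec.se_eq, h]
  exact P.normalize_spec.trans (hnf ▸ Q.normalize_spec.symm)
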